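/- For G = ℤ/2^n ℤ with n ≥ 2, the minimal number of vertices μ(G) of a graph with automorphism group isomorphic to G satisfies μ(G) ≤ 2^n + 6 < 2·|G|, for all n ≥ 3. -/

import Mathlib

/-- One-directional edge description of the graph `Γ_m`, on labels `1,…,m+6`. -/
def rel0 (m a b : ℕ) : Prop :=
  (1 ≤ a ∧ a ≤ m - 1 ∧ b = a + 1) ∨ (a = 1 ∧ b = m) ∨
  (a = m+1 ∧ 1 ≤ b ∧ b ≤ m ∧ (b % 4 = 1 ∨ b % 4 = 2)) ∨
  (a = m+2 ∧ 1 ≤ b ∧ b ≤ m ∧ (b % 4 = 2 ∨ b % 4 = 3)) ∨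
  (a = m+3 ∧ 1 ≤ b ∧ b ≤ m ∧ (b % 4 = 3 ∨ b % 4 = 0)) ∨
  (a = m+4 ∧ 1 ≤ b ∧ b ≤ m ∧ (b % 4 = 0 ∨ b % 4 = 1)) ∨
  (a = m+5 ∧ 1 ≤ b ∧ b ≤ m ∧ b % 2 = 1) ∨
  (a = m+6 ∧ 1 ≤ b ∧ b ≤ m ∧ b % 2 = 0) ∨
  (a = m+1 ∧ b = m+5) ∨ (a = m+3 ∧ b = m+5) ∨
  (a = m+2 ∧ b = m+6) ∨ (a = m+4 ∧ b = m+6)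

instance (m a b : ℕ) : Decidable (rel0 m a b) := by unfold rel0; infer_instance

/-- The graph `Γ_m` on vertex set `{1,…,m+6}`, encoded on `Fin (m+6)`
    where the vertex `v : Fin (m+6)` carries the label `v.val + 1`. -/
def Gamma (m : ℕ) : SimpleGraph (Fin (m+6)) where
  Adj a b := a ≠ b ∧ (rel0 m (a.val+1) (b.val+1) ∨ rel0 m (b.val+1) (a.val+1))
  symm := ⟨fun a b h => ⟨fun e => h.1 e.symm, h.2.symm⟩⟩
  loopless := ⟨fun a h => h.1 rfl⟩

instance (m : ℕ) : DecidableRel (Gamma m).Adj := fun a b =>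
  inferInstanceAs (Decidable (a ≠ b ∧ _))

/-- The permutation `g = (1,2,…,m)(m+1,m+2,m+3,m+4)(m+5,m+6)` on labels,
    written on `Fin (m+6)` (label = index + 1). -/
def gFun (m : ℕ) (v : Fin (m+6)) : Fin (m+6) :=
  if h : v.val < m then ⟨(v.val + 1) % m, lt_of_lt_of_le (Nat.mod_lt _ (by omega)) (by omega)⟩
  else if h2 : v.val < m + 3 then ⟨v.val + 1, by omega⟩
  else if h3 : v.val = m + 3 then ⟨m, by omega⟩
  else if h4 : v.val = m + 4 then ⟨m + 5, by omega⟩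
  else ⟨m + 4, by omega⟩

/-- `N` carries a graph with automorphism group `ℤ/2^n ℤ`. -/
def HasAutCyclic2 (n N : ℕ) : Prop :=
  ∃ Γ : SimpleGraph (Fin N),
    Nonempty ((Γ ≃g Γ) ≃* Multiplicative (ZMod (2 ^ n)))

/-!
The automorphisms of `Γ_m` (here `4 ∣ m`) are the rotations of its `m`-cycle, so they form
`ℤ/mℤ`. Six marker vertices are attached to the cycle according to the residue of a position
mod 4 (four markers) and mod 2 (two markers), so a rotation by `c` extends to a graph
automorphism by shifting the markers by `c mod 4` and `c mod 2`. Conversely, cycle vertices have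
degree 5 and markers degree `m/2 + 1` or `m/2 + 2`, so every automorphism preserves the cycle
(when `m = 8` a count of triangles through a vertex is needed as well). An automorphism fixing a
cycle vertex is the identity or a reflection on the cycle; the markers rule out the reflection,
and are determined by their neighbours on the cycle.
-/

open Finset

namespace SimpleGraph

variable {V W : Type*}

def Iso.fromRel {r : V → V → Prop} {s : W → W → Prop} (e : V ≃ W)
    (h : ∀ u v, s (e u) (e v) ↔ r u v) : fromRel r ≃g fromRel s where
  toEquiv := e
  map_rel_iff' {u v} := by simp [h, e.injective.ne_iff]

def Iso.autCongr {G : SimpleGraph V} {G' : SimpleGraph W} (e : G ≃g G') :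
    (G ≃g G) ≃* (G' ≃g G') where
  toFun φ := e.symm.trans (φ.trans e)
  invFun ψ := e.trans (ψ.trans e.symm)
  left_inv φ := RelIso.ext fun v => by simp
  right_inv ψ := RelIso.ext fun v => by simp
  map_mul' φ ψ := RelIso.ext fun v => by simp [RelIso.mul_apply]

def neighborAdjPairs (G : SimpleGraph V) [Fintype V] [DecidableRel G.Adj] (v : V) :
    Finset (V × V) :=
  {p | G.Adj v p.1 ∧ G.Adj v p.2 ∧ G.Adj p.1 p.2}

theorem Iso.card_neighborAdjPairs {G : SimpleGraph V} {G' : SimpleGraph W}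
    [Fintype V] [Fintype W] [DecidableRel G.Adj] [DecidableRel G'.Adj] (φ : G ≃g G') (v : V) :
    #(G'.neighborAdjPairs (φ v)) = #(G.neighborAdjPairs v) :=
  (card_equiv (φ.toEquiv.prodCongr φ.toEquiv) fun p => by
    simp [neighborAdjPairs, φ.map_adj_iff]).symm

end SimpleGraph

lemma Finset.card_filter_sum {α β : Type*} [Fintype α] [Fintype β] (p : α ⊕ β → Prop)
    [DecidablePred p] : #{v | p v} = #{a | p (.inl a)} + #{b | p (.inr b)} := by
  rw [← card_toLeft_add_card_toRight]
  congr 2 <;> ext <;> simp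

namespace ZMod

variable {k m : ℕ}

lemma one_ne_zero_of_four_dvd (h4 : 4 ∣ m) : (1 : ZMod m) ≠ 0 := fun h => by
  have := congrArg (castHom h4 (ZMod 4)) h
  rw [map_one, map_zero] at this
  exact absurd this (by decide)

lemma two_ne_zero_of_four_dvd (h4 : 4 ∣ m) : (2 : ZMod m) ≠ 0 := fun h => by
  have := congrArg (castHom h4 (ZMod 4)) h
  rw [map_ofNat, map_zero] at this
  exact absurd this (by decide)

variable [NeZero k] [NeZero m]

lemma card_filter_cast_eq (hk : k ∣ m) (t : ZMod k) :
    #{x : ZMod m | (cast x : ZMod k) = t} = m / k := by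
  let f := castHom hk (ZMod k)
  have hfib : ∀ t, #{x | f x = t} = #{x | f x = 0} := fun t =>
    AddMonoidHom.card_fiber_eq_of_mem_range f.toAddMonoidHom
      (castHom_surjective hk t) (castHom_surjective hk 0)
  have hsum : m = k * #{x | f x = t} := by
    simpa [hfib] using card_eq_sum_card_fiberwise (f := f) (s := univ) (t := univ)
      (fun _ _ => mem_univ _)
  exact (Nat.div_eq_of_eq_mul_right (NeZero.pos k) hsum).symm

lemma card_filter_cast (hk : k ∣ m) (p : ZMod k → Prop) [DecidablePred p] :
    #{x : ZMod m | p (cast x)} = #{t | p t} * (m / k) := by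
  rw [card_eq_sum_card_fiberwise (f := fun x : ZMod m => (cast x : ZMod k)) (t := {t | p t})
    (fun x hx => by simpa using hx), ← sum_const_nat fun t _ => card_filter_cast_eq hk t]
  refine sum_congr rfl fun t ht => ?_
  rw [filter_filter]
  refine congrArg Finset.card (filter_congr fun x _ => ?_)
  simp only [mem_filter, mem_univ, true_and] at ht
  exact ⟨And.right, fun hx => ⟨hx ▸ ht, hx⟩⟩

theorem eq_id_or_eq_neg_of_succ (h2 : (2 : ZMod m) ≠ 0) {f : ZMod m → ZMod m}
    (hf : Function.Injective f) (h0 : f 0 = 0)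
    (hstep : ∀ x, f (x + 1) = f x + 1 ∨ f x = f (x + 1) + 1) :
    f = id ∨ f = Neg.neg := by
  have hs : f 1 = 1 ∨ f 1 = -1 := by
    rcases hstep 0 with h | h <;> rw [zero_add, h0] at h
    exacts [.inl (by simpa using h), .inr (by linear_combination -h)]
  have hstep' : ∀ x, f (x + 1) = f x + f 1 ∨ f (x + 1) = f x - f 1 := fun x => by
    rcases hs with hs | hs <;> rcases hstep x with h | h <;> rw [hs]
    exacts [.inl (by linear_combination h), .inr (by linear_combination -h),
      .inr (by linear_combination h), .inl (by linear_combination -h)]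
  -- stepping back by `f 1` would give `f (k + 2) = f k`, impossible since `2 ≠ 0`
  have key : ∀ k : ℕ, f k = f 1 * k ∧ f (k + 1) = f 1 * (k + 1) := by
    intro k
    induction k with
    | zero => simp [h0]
    | succ k ih =>
      push_cast
      refine ⟨ih.2, ?_⟩
      rcases hstep' (k + 1) with h | h
      · rw [h, ih.2]; ring
      · have hk : f ((k : ZMod m) + 1 + 1) = f k := by rw [h, ih.2, ih.1]; ring
        exact absurd (hf hk) fun hk => h2 (by linear_combination hk)
  have hmul : ∀ x, f x = f 1 * x := fun x => by simpa using (key x.val).1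
  rcases hs with hs | hs
  · exact .inl (funext fun x => by simp [hmul x, hs])
  · exact .inr (funext fun x => by simp [hmul x, hs])

end ZMod

namespace MarkedCycle

abbrev Marker := ZMod 4 ⊕ ZMod 2

namespace Marker

/-- The parity marker reads the parity off the residue mod 4, so that every marker sees a cycle
vertex only through its residue mod 4. -/
def Covers : Marker → ZMod 4 → Prop
  | .inl i, t => t = i ∨ t = i + 1
  | .inr j, t => (ZMod.cast t : ZMod 2) = j

instance : DecidableRel Covers
  | .inl _, _ => inferInstanceAs (Decidable (_ ∨ _))
  | .inr _, _ => inferInstanceAs (Decidable (_ = _))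

def Adj : Marker → Marker → Prop
  | .inl i, .inr j => (ZMod.cast i : ZMod 2) = j
  | _, _ => False

instance : DecidableRel Adj
  | .inl _, .inr _ => inferInstanceAs (Decidable (_ = _))
  | .inl _, .inl _ => inferInstanceAs (Decidable False)
  | .inr _, .inl _ => inferInstanceAs (Decidable False)
  | .inr _, .inr _ => inferInstanceAs (Decidable False)

def shift (t : ZMod 4) : Marker ≃ Marker :=
  Equiv.sumCongr (Equiv.addRight t) (Equiv.addRight (ZMod.cast t))

lemma covers_shift : ∀ t s w, Covers (shift t w) (s + t) ↔ Covers w s := by decide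

lemma adj_shift : ∀ t w w', Adj (shift t w) (shift t w') ↔ Adj w w' := by decide

lemma shift_zero : ∀ w, shift 0 w = w := by decide

lemma shift_add : ∀ t t' w, shift (t + t') w = shift t (shift t' w) := by decide

lemma ne_of_adj : ∀ w w', Adj w w' → w ≠ w' := by decide

lemma eq_of_forall_covers_iff : ∀ w w', (∀ t, Covers w t ↔ Covers w' t) → w = w' := by
  decide

/-- A reflection of the cycle fixing position 0 would send the marker of residues `{0, 1}` to
that of `{3, 0}` and fix the even-parity marker; the first two are adjacent, their images not. -/
lemma not_adj_of_covers_neg : ∀ a b, (∀ t, Covers a (-t) ↔ Covers (.inl 0) t) →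
    (∀ t, Covers b (-t) ↔ Covers (.inr 0) t) → ¬ (Adj a b ∨ Adj b a) := by
  decide

lemma card_covers : ∀ t, #{w | Covers w t} = 3 := by decide

lemma card_covered : ∀ w, #{t | Covers w t} = 2 := by decide

lemma card_adj : ∀ w, #{w' | Adj w w' ∨ Adj w' w} = if w.isLeft then 1 else 2 := by decide

end Marker

abbrev Vertex (m : ℕ) := ZMod m ⊕ Marker

def Rel (m : ℕ) : Vertex m → Vertex m → Prop
  | .inl x, .inl y => y = x + 1
  | .inr w, .inl x => w.Covers (ZMod.cast x)
  | .inr w, .inr w' => w.Adj w'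
  | .inl _, .inr _ => False

instance (m : ℕ) : DecidableRel (Rel m)
  | .inl _, .inl _ => inferInstanceAs (Decidable (_ = _))
  | .inr _, .inl _ => inferInstanceAs (Decidable (Marker.Covers _ _))
  | .inr _, .inr _ => inferInstanceAs (Decidable (Marker.Adj _ _))
  | .inl _, .inr _ => inferInstanceAs (Decidable False)

/-- For `4 ∣ m` this is the paper's `Γ_m` (the graph `Gamma m` above), with label `x + 1 ≤ m`
as `.inl x`, label `m + 1 + i` as `.inr (.inl i)` and label `m + 5 + j` as `.inr (.inr j)`. -/
def graph (m : ℕ) : SimpleGraph (Vertex m) := SimpleGraph.fromRel (Rel m)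

instance (m : ℕ) : DecidableRel (graph m).Adj :=
  inferInstanceAs (DecidableRel (SimpleGraph.fromRel (Rel m)).Adj)

variable {m : ℕ}

lemma adj_inl_inl {x y : ZMod m} (h : (1 : ZMod m) ≠ 0) :
    (graph m).Adj (.inl x) (.inl y) ↔ y = x + 1 ∨ x = y + 1 := by
  simp only [graph, SimpleGraph.fromRel_adj, Rel, ne_eq, Sum.inl.injEq, and_iff_right_iff_imp]
  rintro (rfl | rfl) <;> simpa [eq_comm] using h

lemma adj_inr_inl {w : Marker} {x : ZMod m} :
    (graph m).Adj (.inr w) (.inl x) ↔ w.Covers (ZMod.cast x) := by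
  simp [graph, Rel]

lemma adj_inr_inr {w w' : Marker} :
    (graph m).Adj (.inr w) (.inr w') ↔ w.Adj w' ∨ w'.Adj w := by
  simp only [graph, SimpleGraph.fromRel_adj, Rel, ne_eq, Sum.inr.injEq, and_iff_right_iff_imp]
  rintro (h | h)
  · exact Marker.ne_of_adj _ _ h
  · exact (Marker.ne_of_adj _ _ h).symm

def translateEquiv (c : ZMod m) : Vertex m ≃ Vertex m :=
  Equiv.sumCongr (Equiv.addRight c) (Marker.shift (ZMod.cast c))

lemma rel_translateEquiv (h4 : 4 ∣ m) (c : ZMod m) (u v : Vertex m) :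
    Rel m (translateEquiv c u) (translateEquiv c v) ↔ Rel m u v := by
  rcases u with x | w <;> rcases v with y | w' <;>
    simp only [Rel, translateEquiv, Equiv.sumCongr_apply, Sum.map_inl, Sum.map_inr,
      Equiv.coe_addRight]
  · rw [add_right_comm, add_left_inj]
  · rw [ZMod.cast_add h4, Marker.covers_shift]
  · exact Marker.adj_shift _ _ _

def translate (h4 : 4 ∣ m) (c : ZMod m) : graph m ≃g graph m :=
  SimpleGraph.Iso.fromRel _ (rel_translateEquiv h4 c)

@[simp] lemma translate_inl (h4 : 4 ∣ m) (c x : ZMod m) :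
    translate h4 c (.inl x) = .inl (x + c) := rfl

@[simp] lemma translate_inr (h4 : 4 ∣ m) (c : ZMod m) (w : Marker) :
    translate h4 c (.inr w) = .inr (Marker.shift (ZMod.cast c) w) := rfl

def translateHom (h4 : 4 ∣ m) : Multiplicative (ZMod m) →* (graph m ≃g graph m) where
  toFun c := translate h4 c.toAdd
  map_one' := RelIso.ext <| by
    rintro (x | w) <;> simp [Marker.shift_zero]
  map_mul' c c' := RelIso.ext <| by
    rintro (x | w)
    · simp only [RelIso.mul_apply, toAdd_mul, translate_inl, Sum.inl.injEq]
      abel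
    · simp [RelIso.mul_apply, ZMod.cast_add h4, Marker.shift_add]

lemma card_neighborAdjPairs_eight_inl :
    ∀ x : ZMod 8, #((graph 8).neighborAdjPairs (.inl x)) = 6 := by
  decide

lemma card_neighborAdjPairs_eight_inr :
    ∀ i : ZMod 4, #((graph 8).neighborAdjPairs (.inr (.inl i))) = 8 := by
  decide

variable [NeZero m]

lemma degree_inl (h4 : 4 ∣ m) (x : ZMod m) : (graph m).degree (.inl x) = 5 := by
  have h2 : x + 1 ≠ x - 1 := fun h =>
    ZMod.two_ne_zero_of_four_dvd h4 (by linear_combination h)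
  rw [← SimpleGraph.card_neighborFinset_eq_degree, SimpleGraph.neighborFinset_eq_filter,
    card_filter_sum]
  simp only [adj_inl_inl (ZMod.one_ne_zero_of_four_dvd h4), (graph m).adj_comm (.inl x) (.inr _),
    adj_inr_inl, Marker.card_covers]
  rw [show ({y | y = x + 1 ∨ x = y + 1} : Finset (ZMod m)) = {x + 1, x - 1} by
    ext y; simp [eq_sub_iff_add_eq, eq_comm], card_pair h2]

lemma degree_inr (h4 : 4 ∣ m) (w : Marker) :
    (graph m).degree (.inr w) = 2 * (m / 4) + if w.isLeft then 1 else 2 := by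
  rw [← SimpleGraph.card_neighborFinset_eq_degree, SimpleGraph.neighborFinset_eq_filter,
    card_filter_sum]
  simp only [adj_inr_inl, adj_inr_inr, ZMod.card_filter_cast h4, Marker.card_covered,
    Marker.card_adj]

lemma isLeft_apply_inl (h4 : 4 ∣ m) (φ : graph m ≃g graph m) (x : ZMod m) :
    (φ (.inl x)).isLeft := by
  rcases hφ : φ (.inl x) with y | w
  · rfl
  have hdeg := φ.degree_eq (.inl x)
  rw [hφ, degree_inl h4, degree_inr h4] at hdeg
  rcases w with i | j
  · have hm : m = 8 := by simp only [Sum.isLeft_inl, if_true] at hdeg; omega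
    subst hm
    have hpairs := φ.card_neighborAdjPairs (.inl x)
    rw [hφ, card_neighborAdjPairs_eight_inl, card_neighborAdjPairs_eight_inr] at hpairs
    omega
  · simp only [Sum.isLeft_inr, Bool.false_eq_true, if_false] at hdeg
    omega

lemma exists_eq_sumMap (h4 : 4 ∣ m) (φ : graph m ≃g graph m) :
    ∃ (f : ZMod m → ZMod m) (g : Marker → Marker), ⇑φ = Sum.map f g := by
  have hl : ∀ x, ∃ y, φ (.inl x) = .inl y := fun x =>
    Sum.isLeft_iff.1 (isLeft_apply_inl h4 φ x)
  have hr : ∀ w, ∃ w', φ (.inr w) = .inr w' := fun w => by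
    rcases hw : φ (.inr w) with y | w'
    · have := isLeft_apply_inl h4 φ.symm y
      rw [← hw, RelIso.symm_apply_apply] at this
      exact absurd this (by simp)
    · exact ⟨w', rfl⟩
  choose f hf using hl
  choose g hg using hr
  exact ⟨f, g, funext fun v => by rcases v with x | w <;> simp [hf, hg]⟩

lemma eq_one_of_apply_inl_zero (h4 : 4 ∣ m) (ψ : graph m ≃g graph m)
    (h0 : ψ (.inl 0) = .inl 0) : ψ = 1 := by
  obtain ⟨f, g, hψ⟩ := exists_eq_sumMap h4 ψ
  have h1 := ZMod.one_ne_zero_of_four_dvd h4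
  have hf_inj : Function.Injective f := fun x y h =>
    Sum.inl_injective (ψ.injective (by simp [hψ, h]))
  have hf := ZMod.eq_id_or_eq_neg_of_succ (ZMod.two_ne_zero_of_four_dvd h4) hf_inj
    (by simpa [hψ] using h0) fun x => by
      simpa [hψ, adj_inl_inl h1] using ψ.map_adj_iff.2 ((adj_inl_inl h1 (x := x)).2 (.inl rfl))
  have hcov : ∀ w x, (g w).Covers (ZMod.cast (f x)) ↔ w.Covers (ZMod.cast x) := fun w x => by
    simpa [hψ, adj_inr_inl] using ψ.map_adj_iff (v := .inr w) (w := .inl x)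
  have hsurj : ∀ t : ZMod 4, ∃ x : ZMod m, ZMod.cast x = t := ZMod.castHom_surjective h4
  rcases hf with rfl | rfl
  · have hg : g = id := funext fun w => Marker.eq_of_forall_covers_iff _ _ fun t => by
      obtain ⟨x, rfl⟩ := hsurj t
      simpa using hcov w x
    exact RelIso.ext fun v => by simp [hψ, hg]
  · have hadj : (graph m).Adj (.inr (.inl 0)) (.inr (.inr 0)) := adj_inr_inr.2 (.inl (by decide))
    refine Marker.not_adj_of_covers_neg (g (.inl 0)) (g (.inr 0)) ?_ ?_
      (adj_inr_inr.1 (by simpa [hψ] using ψ.map_adj_iff.2 hadj)) |>.elim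
    all_goals
      intro t
      obtain ⟨x, rfl⟩ := hsurj t
      simpa [ZMod.cast_neg h4] using hcov _ x

lemma translateHom_bijective (h4 : 4 ∣ m) : Function.Bijective (translateHom h4) := by
  refine ⟨fun c c' h => by simpa [translateHom] using congrArg (· (.inl 0)) h, fun φ => ?_⟩
  obtain ⟨c, hc⟩ := Sum.isLeft_iff.1 (isLeft_apply_inl h4 φ 0)
  refine ⟨.ofAdd c, inv_mul_eq_one.1 (eq_one_of_apply_inl_zero h4 _ ?_)⟩
  rw [RelIso.mul_apply, hc, show Sum.inl c = translateHom h4 (.ofAdd c) (.inl 0) by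
    simp [translateHom], RelIso.inv_apply_self]

noncomputable def autEquiv (h4 : 4 ∣ m) : (graph m ≃g graph m) ≃* Multiplicative (ZMod m) :=
  (MulEquiv.ofBijective _ (translateHom_bijective h4)).symm

end MarkedCycle

lemma hasAutCyclic2_pow_add_six {n : ℕ} (hn : 2 ≤ n) : HasAutCyclic2 n (2 ^ n + 6) := by
  have h4 : 4 ∣ 2 ^ n := pow_dvd_pow 2 hn
  have hcard : Fintype.card (MarkedCycle.Vertex (2 ^ n)) = 2 ^ n + 6 := by simp [ZMod.card]
  exact ⟨_, ⟨((MarkedCycle.graph _).overFinIso hcard).autCongr.symm.trans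
    (MarkedCycle.autEquiv h4)⟩⟩

/-- `μ(ℤ/2^n ℤ) ≤ 2^n + 6` for `n ≥ 2`, and this bound is less
    than `2·|G| = 2^{n+1}` for `n ≥ 3`. -/
theorem stmt19 (n : ℕ) (hn : 2 ≤ n) :
    sInf {N | HasAutCyclic2 n N} ≤ 2 ^ n + 6 ∧
    (3 ≤ n → 2 ^ n + 6 < 2 * 2 ^ n) := by
  refine ⟨Nat.sInf_le (hasAutCyclic2_pow_add_six hn), fun h3 => ?_⟩
  have : 2 ^ 3 ≤ 2 ^ n := Nat.pow_le_pow_right (by norm_num) h3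
  omega
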